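/- Let d ≥ 2 be an integer, d′ = d/(d−1), A = [a_{i_1,…,i_d}] a d-fold array of real numbers indexed by {1,…,n}^d, and let ξ = (ξ_1, …, ξ_n) be a random vector with ‖ξ‖_{E_d} < ∞. Then S_d(ξ) has finite ψ_1-norm and ‖S_d(ξ)‖_{ψ_1} ≤ ‖A‖_{d′} · ‖ξ‖_{E_d}^d. -/

import Mathlib

open MeasureTheory ENNReal

/-- The Luxemburg (ψ_1) norm of a real random variable:
`‖η‖_{ψ_1} = inf{K > 0 : E exp(|η/K|) ≤ 2}` (with value `∞` if no such `K` exists). -/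
noncomputable def psi1Norm {Ω : Type*} [MeasurableSpace Ω] (μ : Measure Ω)
    (η : Ω → ℝ) : ℝ≥0∞ :=
  ⨅ (K : ℝ) (_ : 0 < K)
    (_ : ∫⁻ ω, ENNReal.ofReal (Real.exp (|η ω / K|)) ∂μ ≤ 2), ENNReal.ofReal K

/-- `‖ξ‖_{E_p} = inf{K > 0 : E exp(∑_i |ξ_i|^p / K^p) ≤ 2}`
(with value `∞` if no such `K` exists). -/
noncomputable def epNorm {Ω : Type*} [MeasurableSpace Ω] {n : ℕ} (μ : Measure Ω) (p : ℝ)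
    (ξ : Fin n → Ω → ℝ) : ℝ≥0∞ :=
  ⨅ (K : ℝ) (_ : 0 < K)
    (_ : ∫⁻ ω, ENNReal.ofReal (Real.exp ((∑ i, |ξ i ω| ^ p) / K ^ p)) ∂μ ≤ 2),
    ENNReal.ofReal K

/-! By Hölder's inequality with exponents `d′` and `d`,
`|S_d(x)| ≤ ‖A‖_{d′} (∑_i ∏_k |x_{i_k}|^d)^{1/d} = ‖A‖_{d′} ∑_j |x_j|^d`,
since expanding `(∑_j |x_j|^d)^d` gives exactly the sum over all multi-indices.
Hence every `K` admissible in the infimum defining `‖ξ‖_{E_d}` makes `‖A‖_{d′} K^d`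
(up to an arbitrarily small `ε`) admissible for `‖S_d(ξ)‖_{ψ_1}`; the bound passes to the
infimum over `K` because `x ↦ ‖A‖_{d′} x^d` is continuous. -/

lemma abs_chaos_le {d n : ℕ} (hd : 1 < d) (A : (Fin d → Fin n) → ℝ) (x : Fin n → ℝ) :
    |∑ i : Fin d → Fin n, A i * ∏ k, x (i k)| ≤
      (∑ i : Fin d → Fin n, |A i| ^ ((d : ℝ) / ((d : ℝ) - 1))) ^ (((d : ℝ) - 1) / (d : ℝ)) *
        ∑ j, |x j| ^ (d : ℝ) := by
  have hd' : (1 : ℝ) < d := by exact_mod_cast hd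
  have hprod :
      ∑ i : Fin d → Fin n, |(∏ k, |x (i k)|)| ^ (d : ℝ) = (∑ j, |x j| ^ (d : ℝ)) ^ d := by
    rw [Finset.sum_pow', Fintype.piFinset_univ]
    refine Finset.sum_congr rfl fun i _ => ?_
    rw [abs_of_nonneg (by positivity), ← Real.finsetProd_rpow _ _ (fun _ _ => abs_nonneg _)]
  calc |∑ i : Fin d → Fin n, A i * ∏ k, x (i k)|
      ≤ ∑ i : Fin d → Fin n, |A i| * ∏ k, |x (i k)| := by
        refine (Finset.abs_sum_le_sum_abs _ _).trans_eq ?_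
        simp only [abs_mul, Finset.abs_prod]
    _ ≤ (∑ i : Fin d → Fin n, |A i| ^ ((d : ℝ) / ((d : ℝ) - 1))) ^ (((d : ℝ) - 1) / (d : ℝ)) *
          ((∑ j, |x j| ^ (d : ℝ)) ^ d) ^ ((d : ℝ)⁻¹) := by
        have := Real.inner_le_Lp_mul_Lq Finset.univ (fun i : Fin d → Fin n => |A i|)
          (fun i => ∏ k, |x (i k)|) (Real.HolderConjugate.conjExponent hd').symm
        simpa only [abs_abs, hprod, Real.conjExponent, one_div, inv_div] using this
    _ = _ := by rw [Real.pow_rpow_inv_natCast (by positivity) (by omega)]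

section EpNorm

variable {Ω : Type*} [MeasurableSpace Ω] {μ : Measure Ω} {n : ℕ} {p : ℝ} {ξ : Fin n → Ω → ℝ}

def EpAdmissible (μ : Measure Ω) (p : ℝ) (ξ : Fin n → Ω → ℝ) (K : ℝ) : Prop :=
  0 < K ∧ ∫⁻ ω, ENNReal.ofReal (Real.exp ((∑ i, |ξ i ω| ^ p) / K ^ p)) ∂μ ≤ 2

lemma epNorm_eq_sInf :
    epNorm μ p ξ = sInf (ENNReal.ofReal '' {K | EpAdmissible μ p ξ K}) := by
  simp only [epNorm, sInf_image, Set.mem_ofPred_eq, EpAdmissible, iInf_and]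

lemma le_of_forall_epAdmissible {a : ℝ≥0∞} {g : ℝ≥0∞ → ℝ≥0∞} (hg : Continuous g)
    (hfin : epNorm μ p ξ ≠ ⊤) (h : ∀ K, EpAdmissible μ p ξ K → a ≤ g (ENNReal.ofReal K)) :
    a ≤ g (epNorm μ p ξ) := by
  rw [epNorm_eq_sInf] at hfin ⊢
  have hne : (ENNReal.ofReal '' {K | EpAdmissible μ p ξ K}).Nonempty :=
    Set.nonempty_iff_ne_empty.2 fun h => hfin (by rw [h, sInf_empty])
  refine closure_minimal ?_ (isClosed_le continuous_const hg) (sInf_mem_closure hne)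
  rintro _ ⟨K, hK, rfl⟩
  exact h K hK

end EpNorm

section Psi1Norm

variable {Ω : Type*} [MeasurableSpace Ω] {μ : Measure Ω}

lemma psi1Norm_le_ofReal {η : Ω → ℝ} {L : ℝ} (hL : 0 < L)
    (h : ∫⁻ ω, ENNReal.ofReal (Real.exp (|η ω / L|)) ∂μ ≤ 2) :
    psi1Norm μ η ≤ ENNReal.ofReal L :=
  iInf_le_of_le L (iInf_le_of_le hL (iInf_le_of_le h le_rfl))

lemma psi1Norm_le_of_abs_le_mul_sum_rpow {n : ℕ} {p c K : ℝ} {η : Ω → ℝ}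
    {ξ : Fin n → Ω → ℝ} (hc : 0 ≤ c) (hη : ∀ ω, |η ω| ≤ c * ∑ i, |ξ i ω| ^ p)
    (hK : EpAdmissible μ p ξ K) :
    psi1Norm μ η ≤ ENNReal.ofReal (c * K ^ p) := by
  obtain ⟨hK0, hint⟩ := hK
  have hKp : 0 < K ^ p := Real.rpow_pos_of_pos hK0 p
  -- `c * K ^ p` may vanish, so we test the ψ₁ condition at `c * K ^ p + ε` instead.
  refine ENNReal.le_of_forall_pos_le_add fun ε hε _ => ?_
  have hcK : 0 ≤ c * K ^ p := by positivity
  have hL : 0 < c * K ^ p + ε := by positivity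
  rw [← ENNReal.ofReal_coe_nnreal, ← ENNReal.ofReal_add hcK ε.coe_nonneg]
  refine psi1Norm_le_ofReal hL (le_trans (lintegral_mono fun ω => ?_) hint)
  refine ENNReal.ofReal_le_ofReal (Real.exp_le_exp.2 ?_)
  have hsum : 0 ≤ ∑ i, |ξ i ω| ^ p := by positivity
  rw [abs_div, abs_of_pos hL, div_le_div_iff₀ hL hKp]
  calc |η ω| * K ^ p ≤ (c * ∑ i, |ξ i ω| ^ p) * K ^ p := by gcongr; exact hη ω
    _ ≤ (∑ i, |ξ i ω| ^ p) * (c * K ^ p + ε) := by nlinarith [mul_nonneg hsum ε.coe_nonneg]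

end Psi1Norm

theorem psi1Norm_chaos_le_general {Ω : Type*} [MeasurableSpace Ω] (μ : Measure Ω)
    (d n : ℕ) (hd : 2 ≤ d)
    (A : (Fin d → Fin n) → ℝ) (ξ : Fin n → Ω → ℝ)
    (hfin : epNorm μ (d : ℝ) ξ < ⊤) :
    psi1Norm μ (fun ω => ∑ i : Fin d → Fin n, A i * ∏ k, ξ (i k) ω) < ⊤ ∧
    psi1Norm μ (fun ω => ∑ i : Fin d → Fin n, A i * ∏ k, ξ (i k) ω) ≤
      ENNReal.ofReal ((∑ i : Fin d → Fin n, |A i| ^ ((d : ℝ) / ((d : ℝ) - 1)))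
          ^ (((d : ℝ) - 1) / (d : ℝ))) *
        (epNorm μ (d : ℝ) ξ) ^ d := by
  set C := (∑ i : Fin d → Fin n, |A i| ^ ((d : ℝ) / ((d : ℝ) - 1))) ^ (((d : ℝ) - 1) / (d : ℝ))
  have hC : 0 ≤ C := by positivity
  have hadm : ∀ K, EpAdmissible μ d ξ K →
      psi1Norm μ (fun ω => ∑ i : Fin d → Fin n, A i * ∏ k, ξ (i k) ω) ≤
        ENNReal.ofReal C * ENNReal.ofReal K ^ d := by
    intro K hK
    rw [← ENNReal.ofReal_pow hK.1.le, ← ENNReal.ofReal_mul hC, ← Real.rpow_natCast]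
    exact psi1Norm_le_of_abs_le_mul_sum_rpow hC (fun ω => abs_chaos_le hd A (ξ · ω)) hK
  have hle := le_of_forall_epAdmissible
    ((ENNReal.continuous_const_mul ENNReal.ofReal_ne_top).comp (ENNReal.continuous_pow d))
    hfin.ne hadm
  exact ⟨hle.trans_lt (ENNReal.mul_lt_top ENNReal.ofReal_lt_top (ENNReal.pow_lt_top hfin)), hle⟩

/-- For an integer `d ≥ 2`, `d′ = d/(d-1)`, a `d`-fold array `A` and a
random vector `ξ` with `‖ξ‖_{E_d} < ∞`, the chaos `S_d(ξ)` has finite ψ_1-norm and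
`‖S_d(ξ)‖_{ψ_1} ≤ ‖A‖_{d′} ‖ξ‖_{E_d}^d`. -/
theorem psi1Norm_chaos_le {Ω : Type*} [MeasurableSpace Ω] (μ : Measure Ω)
    [IsProbabilityMeasure μ] (d n : ℕ) (hd : 2 ≤ d)
    (A : (Fin d → Fin n) → ℝ) (ξ : Fin n → Ω → ℝ) (hmeas : ∀ i, Measurable (ξ i))
    (hfin : epNorm μ (d : ℝ) ξ < ⊤) :
    psi1Norm μ (fun ω => ∑ i : Fin d → Fin n, A i * ∏ k, ξ (i k) ω) < ⊤ ∧
    psi1Norm μ (fun ω => ∑ i : Fin d → Fin n, A i * ∏ k, ξ (i k) ω) ≤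
      ENNReal.ofReal ((∑ i : Fin d → Fin n, |A i| ^ ((d : ℝ) / ((d : ℝ) - 1)))
          ^ (((d : ℝ) - 1) / (d : ℝ))) *
        (epNorm μ (d : ℝ) ξ) ^ d :=
  psi1Norm_chaos_le_general μ d n hd A ξ hfin
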